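/- Let $\mathfrak{u}$ be a finite-dimensional unipotent restricted Lie algebra over an algebraically closed field of characteristic $p \ge 3$, and $\mathfrak{m}, \mathfrak{n}$ maximal $p$-subalgebras in $\mathrm{Max}_p(\mathfrak{u})$ with $\mathbb{E}(2,\mathfrak{m}) \cap \mathbb{E}(2,\mathfrak{n}) = \emptyset$. Then the $p$-ideal $\mathfrak{m} \cap \mathfrak{n}$ is cyclic, i.e., generated as a $p$-subalgebra by a single element. -/

import Mathlib

open scoped TensorProduct

attribute [local instance 100] LieRing.ofAssociativeRing

namespace Paper

/-- A restricted Lie algebra structure (`p`-map) on a Lie algebra `L` over `K`: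
a `p`-operation satisfying `(a • x)^{[p]} = a^p • x^{[p]}`, `ad (x^{[p]}) = (ad x)^p`,
and Jacobson's formula, recorded here through the fact that
`(x+y)^{[p]} - x^{[p]} - y^{[p]}` is a sum of the Jacobson terms `s_i(x,y)`, which lie in the
`p`-th term of the lower central series of the subalgebra generated by `x` and `y`. -/
class PStructure (p : ℕ) (K : Type) (L : Type) [Field K] [LieRing L] [LieAlgebra K L] :
    Type where
  pMap : L → L
  smul_pMap : ∀ (a : K) (x : L), pMap (a • x) = a ^ p • pMap x
  ad_pMap : ∀ x : L, LieAlgebra.ad K L (pMap x) = LieAlgebra.ad K L x ^ p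
  jacobson_mem : ∀ x y : L,
    pMap (x + y) - pMap x - pMap y ∈
      Submodule.map (LieSubalgebra.lieSpan K L {x, y}).incl.toLinearMap
        (LieModule.lowerCentralSeries K ↥(LieSubalgebra.lieSpan K L {x, y})
          ↥(LieSubalgebra.lieSpan K L {x, y}) (p - 1)).toSubmodule

section Basic

variable (p : ℕ) (K L : Type) [Field K] [LieRing L] [LieAlgebra K L] [PStructure p K L]

/-- The `p`-map of a restricted Lie algebra. -/
def pmap (x : L) : L := PStructure.pMap (p := p) (K := K) x

/-- The nullcone `V(L) = {x | x^{[p]} = 0}`. -/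
def nullcone : Set L := {x | pmap p K L x = 0}

/-- A restricted Lie algebra is unipotent if some iterate of the `p`-map vanishes. -/
def IsUnipotent : Prop := ∃ n : ℕ, ∀ x : L, (pmap p K L)^[n] x = 0

/-- A `p`-subalgebra: a Lie subalgebra closed under the `p`-map. -/
def IsPSubalgebra (S : LieSubalgebra K L) : Prop := ∀ x ∈ S, pmap p K L x ∈ S

/-- `E(2,L)`: two-dimensional elementary abelian `p`-subalgebras, viewed as subspaces. -/
def E2 : Set (Submodule K L) :=
  {e | Module.finrank K ↥e = 2 ∧ (∀ x ∈ e, ∀ y ∈ e, ⁅x, y⁆ = (0 : L)) ∧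
    ∀ x ∈ e, pmap p K L x = 0}

/-- The elementary abelian `2`-planes lying inside a given subalgebra. -/
def E2in (S : LieSubalgebra K L) : Set (Submodule K L) :=
  {e ∈ E2 p K L | e ≤ S.toSubmodule}

/-- `Max_p(L)`: maximal proper `p`-subalgebras containing some elementary abelian `2`-plane. -/
def MaxP : Set (LieSubalgebra K L) :=
  {m | IsPSubalgebra p K L m ∧ m ≠ ⊤ ∧
    (∀ m' : LieSubalgebra K L, IsPSubalgebra p K L m' → m' ≠ ⊤ → m ≤ m' → m = m') ∧
    (E2in p K L m).Nonempty}

/-- The cyclic `p`-subalgebra `(K z)_p` generated by one element. -/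
def cyclicSpan (z : L) : Submodule K L :=
  Submodule.span K (Set.range fun j : ℕ => (pmap p K L)^[j] z)

end Basic

section Zariski

variable (K V : Type) [Field K] [AddCommGroup V] [Module K V]

/-- The algebra of polynomial functions on a vector space: the subalgebra of functions
generated by the linear forms. -/
def polyFunctions : Subalgebra K (V → K) :=
  Algebra.adjoin K (Set.range fun φ : Module.Dual K V => (φ : V → K))

/-- Zariski-closed subsets: common zero sets of families of polynomial functions. -/
def IsZariskiClosed (s : Set V) : Prop :=
  ∃ S : Set (V → K), S ⊆ (polyFunctions K V : Set (V → K)) ∧ s = {v : V | ∀ f ∈ S, f v = 0}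

/-- The Zariski topology on a vector space. -/
def zariskiTopology : TopologicalSpace V :=
  TopologicalSpace.generateFrom {s : Set V | IsZariskiClosed K V sᶜ}

/-- The topology on the set of subspaces of `V` (in particular on Grassmannians of `2`-planes),
coinduced by the span map from the (Zariski-topologized) space of linearly independent pairs. -/
def planeTopology : TopologicalSpace (Submodule K V) :=
  TopologicalSpace.coinduced
    (fun q : {q : V × V // LinearIndependent K ![q.1, q.2]} =>
      Submodule.span K {q.val.1, q.val.2})
    (TopologicalSpace.induced Subtype.val (zariskiTopology K (V × V)))

end Zariski

end Paper
namespace Paper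

section U0

variable (p : ℕ) (K L : Type) [Field K] [LieRing L] [LieAlgebra K L] [PStructure p K L]

/-- The defining relations of the restricted enveloping algebra: `x^p = x^{[p]}`. -/
inductive U0Rel : UniversalEnvelopingAlgebra K L → UniversalEnvelopingAlgebra K L → Prop
  | rel (x : L) : U0Rel (UniversalEnvelopingAlgebra.ι K x ^ p)
      (UniversalEnvelopingAlgebra.ι K (pmap p K L x))

/-- The restricted enveloping algebra `U₀(L)`. -/
def U0 : Type := RingQuot (U0Rel p K L)

noncomputable instance : Ring (U0 p K L) := inferInstanceAs (Ring (RingQuot _))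
noncomputable instance : Algebra K (U0 p K L) := inferInstanceAs (Algebra K (RingQuot _))

/-- The canonical map `L → U₀(L)`. -/
noncomputable def u0ι : L →ₗ[K] U0 p K L :=
  ((RingQuot.mkAlgHom K (U0Rel p K L)).toLinearMap).comp
    (UniversalEnvelopingAlgebra.ι (R := K) (L := L)).toLinearMap

variable {p K L}

lemma u0ι_lie (x y : L) :
    u0ι p K L ⁅x, y⁆ = u0ι p K L x * u0ι p K L y - u0ι p K L y * u0ι p K L x := by
  have h : UniversalEnvelopingAlgebra.ι (R := K) ⁅x, y⁆
      = UniversalEnvelopingAlgebra.ι (R := K) x * UniversalEnvelopingAlgebra.ι (R := K) y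
        - UniversalEnvelopingAlgebra.ι (R := K) y * UniversalEnvelopingAlgebra.ι (R := K) x := by
    rw [LieHom.map_lie, Ring.lie_def]
  have e : ∀ z : L, u0ι p K L z
      = RingQuot.mkAlgHom K (U0Rel p K L) (UniversalEnvelopingAlgebra.ι K z) := fun z => rfl
  rw [e, e, e, h, map_sub, map_mul, map_mul]
  rfl

/-- `U₀(L)` is a Lie module over `L` via left multiplication. -/
noncomputable instance : LieRingModule L (U0 p K L) where
  bracket x u := u0ι p K L x * u
  add_lie x y u := by
    show u0ι p K L (x + y) * u = u0ι p K L x * u + u0ι p K L y * u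
    rw [map_add, add_mul]
  lie_add x u v := by
    show u0ι p K L x * (u + v) = u0ι p K L x * u + u0ι p K L x * v
    rw [mul_add]
  leibniz_lie x y u := by
    show u0ι p K L x * (u0ι p K L y * u)
      = u0ι p K L ⁅x, y⁆ * u + u0ι p K L y * (u0ι p K L x * u)
    rw [u0ι_lie, sub_mul, mul_assoc, mul_assoc, sub_add_cancel]

noncomputable instance : LieModule K L (U0 p K L) where
  smul_lie t x u := by
    show u0ι p K L (t • x) * u = t • (u0ι p K L x * u)
    rw [map_smul, smul_mul_assoc]
  lie_smul t x u := by
    show u0ι p K L x * t • u = t • (u0ι p K L x * u)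
    rw [mul_smul_comm]

end U0

section Modules

variable (p : ℕ) (K L : Type) [Field K] [LieRing L] [LieAlgebra K L] [PStructure p K L]

/-- Pi types of Lie modules are Lie modules. -/
instance piLieRingModule {ι : Type} {M : ι → Type} [∀ i, AddCommGroup (M i)]
    [∀ i, LieRingModule L (M i)] : LieRingModule L (∀ i, M i) where
  bracket x f := fun i => ⁅x, f i⁆
  add_lie x y f := by funext i; exact add_lie x y (f i)
  lie_add x f g := by funext i; exact lie_add x (f i) (g i)
  leibniz_lie x y f := by funext i; exact leibniz_lie x y (f i)

instance piLieModule {ι : Type} {M : ι → Type} [∀ i, AddCommGroup (M i)] [∀ i, Module K (M i)]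
    [∀ i, LieRingModule L (M i)] [∀ i, LieModule K L (M i)] : LieModule K L (∀ i, M i) where
  smul_lie t x f := by funext i; exact smul_lie t x (f i)
  lie_smul t x f := by funext i; exact lie_smul t x (f i)

/-- Products of Lie modules are Lie modules. -/
instance prodLieRingModule {M N : Type} [AddCommGroup M] [AddCommGroup N]
    [LieRingModule L M] [LieRingModule L N] : LieRingModule L (M × N) where
  bracket x q := (⁅x, q.1⁆, ⁅x, q.2⁆)
  add_lie x y q := by ext <;> simp [add_lie]
  lie_add x q r := by ext <;> simp [lie_add]
  leibniz_lie x y q := by ext <;> simp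

instance prodLieModule {M N : Type} [AddCommGroup M] [AddCommGroup N] [Module K M] [Module K N]
    [LieRingModule L M] [LieRingModule L N] [LieModule K L M] [LieModule K L N] :
    LieModule K L (M × N) where
  smul_lie t x q := by
    refine Prod.ext ?_ ?_
    · exact smul_lie t x q.1
    · exact smul_lie t x q.2
  lie_smul t x q := by
    refine Prod.ext ?_ ?_
    · exact lie_smul t x q.1
    · exact lie_smul t x q.2

/-- A Lie module is restricted if the `p`-map acts as the `p`-th power of the action. -/
def IsRestrictedModule (M : Type) [AddCommGroup M] [Module K M] [LieRingModule L M]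
    [LieModule K L M] : Prop :=
  ∀ x : L, LieModule.toEnd K L M (pmap p K L x) = LieModule.toEnd K L M x ^ p

/-- A module is projective over `U₀(L)` iff it is a direct summand of a finite free module. -/
def IsProjectiveMod (P : Type) [AddCommGroup P] [Module K P] [LieRingModule L P]
    [LieModule K L P] : Prop :=
  ∃ (n : ℕ) (i : P →ₗ⁅K,L⁆ (Fin n → U0 p K L)) (r : (Fin n → U0 p K L) →ₗ⁅K,L⁆ P),
    r.comp i = LieModuleHom.id

/-- `M` is (up to iso) the kernel of a surjection from a free `U₀(L)`-module onto `N`;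
such kernels compute the Heller shift `Ω(N)` up to projective direct summands. -/
def IsSyzygyStep (N : Type) [AddCommGroup N] [Module K N] [LieRingModule L N] [LieModule K L N]
    (M : Type) [AddCommGroup M] [Module K M] [LieRingModule L M] [LieModule K L M] : Prop :=
  ∃ (n : ℕ) (f : (Fin n → U0 p K L) →ₗ⁅K,L⁆ N), Function.Surjective f ∧
    Nonempty (M ≃ₗ⁅K,L⁆ ↥(LieModuleHom.ker f))

end Modules

end Paper
namespace Paper

section Heller

variable (p : ℕ) (K L : Type) [Field K] [LieRing L] [LieAlgebra K L] [PStructure p K L]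

/-- `M` is (up to iso) an `n`-th syzygy of `N` over `U₀(L)`, computed by iterated
kernels of surjections from free modules. -/
def IsNthSyzygy : (n : ℕ) → (N : Type) → [AddCommGroup N] → [Module K N] →
    [LieRingModule L N] → [LieModule K L N] → (M : Type) → [AddCommGroup M] → [Module K M] →
    [LieRingModule L M] → [LieModule K L M] → Prop
  | 0, N, _, _, _, _, M, _, _, _, _ => Nonempty (M ≃ₗ⁅K,L⁆ N)
  | n + 1, N, _, _, _, _, M, _, _, _, _ =>
    ∃ (X : Type) (_ : AddCommGroup X) (_ : Module K X) (_ : LieRingModule L X)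
      (_ : LieModule K L X), IsSyzygyStep p K L N X ∧ IsNthSyzygy n X M

/-- Stable isomorphism: isomorphism after adding projective direct summands. -/
def StablyIso (M : Type) [AddCommGroup M] [Module K M] [LieRingModule L M] [LieModule K L M]
    (N : Type) [AddCommGroup N] [Module K N] [LieRingModule L N] [LieModule K L N] : Prop :=
  ∃ (P Q : Type) (_ : AddCommGroup P) (_ : Module K P) (_ : LieRingModule L P)
    (_ : LieModule K L P) (_ : AddCommGroup Q) (_ : Module K Q) (_ : LieRingModule L Q)
    (_ : LieModule K L Q), IsProjectiveMod p K L P ∧ IsProjectiveMod p K L Q ∧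
      Nonempty ((M × P) ≃ₗ⁅K,L⁆ (N × Q))

/-- `M ≅ (n-th syzygy of N) ⊕ (projective)`. -/
def StablyNthSyzygy (n : ℕ) (N : Type) [AddCommGroup N] [Module K N] [LieRingModule L N]
    [LieModule K L N] (M : Type) [AddCommGroup M] [Module K M] [LieRingModule L M]
    [LieModule K L M] : Prop :=
  ∃ (X : Type) (_ : AddCommGroup X) (_ : Module K X) (_ : LieRingModule L X)
    (_ : LieModule K L X), IsNthSyzygy p K L n N X ∧ StablyIso p K L M X

/-- `M ≅ Ω^z(N) ⊕ (projective)` for `z : ℤ`; for negative `z` this is expressed by the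
(equivalent) condition that `N` is stably the `(-z)`-th syzygy of `M`. -/
def IsStableHeller (z : ℤ) (N : Type) [AddCommGroup N] [Module K N] [LieRingModule L N]
    [LieModule K L N] (M : Type) [AddCommGroup M] [Module K M] [LieRingModule L M]
    [LieModule K L M] : Prop :=
  ∃ n : ℕ, (z = (n : ℤ) ∧ StablyNthSyzygy p K L n N M) ∨
    (z = -(n : ℤ) ∧ StablyNthSyzygy p K L n M N)

end Heller

section Char

variable (p : ℕ) (K L : Type) [Field K] [LieRing L] [LieAlgebra K L] [PStructure p K L]

/-- A character of the restricted Lie algebra, i.e. an algebra homomorphism `U₀(L) → K`: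
equivalently, a linear form vanishing on brackets and compatible with the `p`-map. -/
structure PCharacter : Type where
  toLinear : L →ₗ[K] K
  map_lie' : ∀ x y : L, toLinear ⁅x, y⁆ = 0
  map_pmap' : ∀ x : L, toLinear (pmap p K L x) = toLinear x ^ p

end Char

section CharMod

variable {p : ℕ} {K L : Type} [Field K] [LieRing L] [LieAlgebra K L] [PStructure p K L]

/-- The one-dimensional module `K_λ` attached to a character `λ`. -/
def CharMod (_lam : PCharacter p K L) : Type := K

namespace CharMod

instance (lam : PCharacter p K L) : AddCommGroup (CharMod lam) :=
  inferInstanceAs (AddCommGroup K)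

instance (lam : PCharacter p K L) : Module K (CharMod lam) := inferInstanceAs (Module K K)

instance (lam : PCharacter p K L) : LieRingModule L (CharMod lam) where
  bracket x a := lam.toLinear x • a
  add_lie x y a := by
    show lam.toLinear (x + y) • a = lam.toLinear x • a + lam.toLinear y • a
    rw [map_add, add_smul]
  lie_add x a b := by
    show lam.toLinear x • (a + b) = lam.toLinear x • a + lam.toLinear x • b
    rw [smul_add]
  leibniz_lie x y a := by
    show lam.toLinear x • lam.toLinear y • a
      = lam.toLinear ⁅x, y⁆ • a + lam.toLinear y • lam.toLinear x • a
    rw [lam.map_lie', zero_smul, zero_add, smul_comm]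

instance (lam : PCharacter p K L) : LieModule K L (CharMod lam) where
  smul_lie t x a := by
    show lam.toLinear (t • x) • a = t • lam.toLinear x • a
    rw [map_smul, smul_assoc]
  lie_smul t x a := by
    show lam.toLinear x • t • a = t • lam.toLinear x • a
    rw [smul_comm]

end CharMod

end CharMod

section Char2

variable (p : ℕ) (K L : Type) [Field K] [LieRing L] [LieAlgebra K L] [PStructure p K L]

/-- The trivial (zero) character. -/
def trivChar (hp : p ≠ 0) : PCharacter p K L where
  toLinear := 0
  map_lie' := by intro x y; simp
  map_pmap' := by intro x; simp [zero_pow hp]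

/-- An endotrivial module: `M ⊗ M* ≅ K ⊕ (projective)` over `U₀(L)`. -/
def IsEndotrivial (hp : p ≠ 0) (M : Type) [AddCommGroup M] [Module K M] [LieRingModule L M]
    [LieModule K L M] : Prop :=
  ∃ (P : Type) (_ : AddCommGroup P) (_ : Module K P) (_ : LieRingModule L P)
    (_ : LieModule K L P), IsProjectiveMod p K L P ∧
      Nonempty ((M ⊗[K] Module.Dual K M) ≃ₗ⁅K,L⁆ ((CharMod (trivChar p K L hp)) × P))

end Char2

end Paper
namespace Paper

section Counit

variable (p : ℕ) (K L : Type) [Field K] [LieRing L] [LieAlgebra K L] [PStructure p K L]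

/-- The zero Lie algebra homomorphism `L → K`. -/
def zeroLieHom : L →ₗ⁅K⁆ K :=
  { (0 : L →ₗ[K] K) with map_lie' := by intro x y; simp }

/-- The counit (augmentation) `ε : U₀(L) → K`. -/
noncomputable def counit (hp : p ≠ 0) : U0 p K L →ₐ[K] K :=
  RingQuot.liftAlgHom K ⟨UniversalEnvelopingAlgebra.lift K (zeroLieHom K L), by
    rintro x y ⟨z⟩
    rw [map_pow, UniversalEnvelopingAlgebra.lift_ι_apply, UniversalEnvelopingAlgebra.lift_ι_apply]
    show (0 : K) ^ p = (0 : K)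
    exact zero_pow hp⟩

/-- A minimal step: kernel of a minimal surjection from a free module, i.e. a surjection
whose kernel is contained in `rad · F` (with the radical of `U₀` of a unipotent algebra
given by the augmentation ideal `ker ε`).  This computes the honest Heller shift `Ω(N)`. -/
def IsMinSyzygyStep (hp : p ≠ 0) (N : Type) [AddCommGroup N] [Module K N] [LieRingModule L N]
    [LieModule K L N] (M : Type) [AddCommGroup M] [Module K M] [LieRingModule L M]
    [LieModule K L M] : Prop :=
  ∃ (n : ℕ) (f : (Fin n → U0 p K L) →ₗ⁅K,L⁆ N), Function.Surjective f ∧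
    (LieModuleHom.ker f).toSubmodule ≤ Submodule.restrictScalars K
      ((RingHom.ker (counit p K L hp)) • (⊤ : Submodule (U0 p K L) (Fin n → U0 p K L))) ∧
    Nonempty (M ≃ₗ⁅K,L⁆ ↥(LieModuleHom.ker f))

/-- `M` is the `n`-th minimal syzygy (Heller shift `Ωⁿ N`) of `N`. -/
def IsMinNthSyzygy (hp : p ≠ 0) : (n : ℕ) → (N : Type) → [AddCommGroup N] → [Module K N] →
    [LieRingModule L N] → [LieModule K L N] → (M : Type) → [AddCommGroup M] → [Module K M] →
    [LieRingModule L M] → [LieModule K L M] → Prop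
  | 0, N, _, _, _, _, M, _, _, _, _ => Nonempty (M ≃ₗ⁅K,L⁆ N)
  | n + 1, N, _, _, _, _, M, _, _, _, _ =>
    ∃ (X : Type) (_ : AddCommGroup X) (_ : Module K X) (_ : LieRingModule L X)
      (_ : LieModule K L X), IsMinSyzygyStep p K L hp N X ∧ IsMinNthSyzygy hp n X M

end Counit

section E2Subalg

variable (p : ℕ) (K L : Type) [Field K] [LieRing L] [LieAlgebra K L] [PStructure p K L]

/-- An elementary abelian plane `e ∈ E(2,L)` as a Lie subalgebra. -/
def E2.subalg (e : Submodule K L) (he : e ∈ E2 p K L) : LieSubalgebra K L :=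
  { e with
    lie_mem' := fun {x y} hx hy => Set.mem_of_eq_of_mem (he.2.1 x hx y hy) e.zero_mem }

/-- The restricted structure on an elementary abelian plane: the `p`-map vanishes. -/
def E2.pstruct (e : Submodule K L) (he : e ∈ E2 p K L) (hp : p ≠ 0) :
    PStructure p K ↥(E2.subalg p K L e he) where
  pMap _ := 0
  smul_pMap a x := by simp
  ad_pMap x := by
    have hx : LieAlgebra.ad K ↥(E2.subalg p K L e he) x = 0 := by
      ext y
      show ((⁅x, y⁆ : ↥(E2.subalg p K L e he)) : L) = ((0 : ↥(E2.subalg p K L e he)) : L)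
      rw [LieSubalgebra.coe_bracket, ZeroMemClass.coe_zero]
      exact he.2.1 _ x.2 _ y.2
    rw [hx, zero_pow hp]
    exact (LieAlgebra.ad K ↥(E2.subalg p K L e he)).map_zero
  jacobson_mem x y := by simp

/-- The syzygy function of an endotrivial module: `s_M(e) = s` iff the restriction of `M`
to `e` is `Ω^s(K) ⊕ (projective)` over `U₀(e)`. -/
def SyzygyFunctionEq (hp : p ≠ 0) (e : Submodule K L) (he : e ∈ E2 p K L) (M : Type)
    [AddCommGroup M] [Module K M] [LieRingModule L M] [LieModule K L M] (s : ℤ) : Prop :=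
  letI := E2.pstruct p K L e he hp
  IsStableHeller p K ↥(E2.subalg p K L e he) s
    (CharMod (trivChar p K ↥(E2.subalg p K L e he) hp)) M

/-- The degree function `deg_M(e) = dim M / 𝔎(M|_e)`, where the generic kernel
`𝔎(M|_e) = Σ_{x ∈ ℙ(e)} ker x_M`. -/
noncomputable def degE (e : Submodule K L) (M : Type) [AddCommGroup M] [Module K M]
    [LieRingModule L M] [LieModule K L M] : ℕ :=
  Module.finrank K M -
    Module.finrank K ↥(⨆ (x : L) (_ : x ∈ e ∧ x ≠ 0),
      LinearMap.ker (LieModule.toEnd K L M x))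

end E2Subalg

end Paper

namespace Paper

section Statement4Proof

variable {p : ℕ} {K L : Type} [Field K] [LieRing L] [LieAlgebra K L] [PStructure p K L]
variable [Fact (Nat.Prime p)]
set_option linter.unusedSectionVars false

lemma pmap_smul' (a : K) (x : L) : pmap p K L (a • x) = a ^ p • pmap p K L x :=
  PStructure.smul_pMap a x

lemma pmap_zero' : pmap p K L 0 = 0 := by
  have h := pmap_smul' (p := p) (L := L) (0 : K) 0
  rwa [zero_smul, zero_pow (Fact.out : Nat.Prime p).ne_zero, zero_smul] at h

lemma ad_pmap' (x : L) :
    LieAlgebra.ad K L (pmap p K L x) = LieAlgebra.ad K L x ^ p :=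
  PStructure.ad_pMap x

lemma ad_pmap_iter (x : L) (k : ℕ) :
    LieAlgebra.ad K L ((pmap p K L)^[k] x) = LieAlgebra.ad K L x ^ p ^ k := by
  induction k with
  | zero => simp
  | succ k ih =>
    rw [Function.iterate_succ_apply', ad_pmap', ih, ← pow_mul, ← pow_succ]

lemma ad_pow_self (x : L) (n : ℕ) : (LieAlgebra.ad K L x ^ (n + 1)) x = 0 := by
  rw [pow_succ, Module.End.mul_apply, LieAlgebra.ad_apply, lie_self, map_zero]

lemma lie_pmap_iter_self (z : L) (j : ℕ) : ⁅z, (pmap p K L)^[j] z⁆ = 0 := by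
  have h : ⁅(pmap p K L)^[j] z, z⁆ = 0 := by
    have had := ad_pmap_iter (p := p) (K := K) z j
    have hp : p ^ j = (p ^ j - 1) + 1 := by
      have : 0 < p ^ j := pow_pos (Fact.out : Nat.Prime p).pos _
      omega
    calc ⁅(pmap p K L)^[j] z, z⁆
        = (LieAlgebra.ad K L ((pmap p K L)^[j] z)) z := rfl
      _ = (LieAlgebra.ad K L z ^ p ^ j) z := by rw [had]
      _ = 0 := by rw [hp]; exact ad_pow_self z _
  rw [← lie_skew, h, neg_zero]

lemma lie_iter_iter (z : L) (i j : ℕ) :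
    ⁅(pmap p K L)^[i] z, (pmap p K L)^[j] z⁆ = 0 := by
  have had := ad_pmap_iter (p := p) (K := K) z i
  have hp : p ^ i = (p ^ i - 1) + 1 := by
    have : 0 < p ^ i := pow_pos (Fact.out : Nat.Prime p).pos _
    omega
  calc ⁅(pmap p K L)^[i] z, (pmap p K L)^[j] z⁆
      = (LieAlgebra.ad K L ((pmap p K L)^[i] z)) ((pmap p K L)^[j] z) := rfl
    _ = (LieAlgebra.ad K L z ^ p ^ i) ((pmap p K L)^[j] z) := by rw [had]
    _ = 0 := by
        rw [hp, pow_succ, Module.End.mul_apply, LieAlgebra.ad_apply,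
          lie_pmap_iter_self, map_zero]

lemma bracket_span_mem {R : Set L} {W : Submodule K L}
    (h : ∀ a ∈ R, ∀ b ∈ R, ⁅a, b⁆ ∈ W) :
    ∀ a ∈ Submodule.span K R, ∀ b ∈ Submodule.span K R, ⁅a, b⁆ ∈ W := by
  have step1 : ∀ a ∈ R, ∀ b ∈ Submodule.span K R, ⁅a, b⁆ ∈ W := by
    intro a ha b hb
    have hle : Submodule.span K R ≤ W.comap (LieAlgebra.ad K L a) :=
      Submodule.span_le.2 fun c hc => h a ha c hc
    exact hle hb
  intro a ha b hb
  have hle : Submodule.span K R ≤ W.comap (LieAlgebra.ad K L b) :=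
    Submodule.span_le.2 fun c hc => by
      show ⁅b, c⁆ ∈ W
      rw [← lie_skew]
      exact W.neg_mem (step1 c hc b hb)
  have hba : ⁅b, a⁆ ∈ W := hle ha
  rw [← lie_skew]
  exact W.neg_mem hba

lemma iter_mem_cyclicSpan (z : L) (j : ℕ) :
    (pmap p K L)^[j] z ∈ cyclicSpan p K L z :=
  Submodule.subset_span ⟨j, rfl⟩

lemma cyclicSpan_comm (z : L) :
    ∀ a ∈ cyclicSpan p K L z, ∀ b ∈ cyclicSpan p K L z, ⁅a, b⁆ = (0 : L) := by
  intro a ha b hb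
  have := bracket_span_mem (W := (⊥ : Submodule K L))
    (R := Set.range fun j : ℕ => (pmap p K L)^[j] z) ?_ a ha b hb
  · simpa using this
  · rintro _ ⟨i, rfl⟩ _ ⟨j, rfl⟩
    simpa using lie_iter_iter z i j

lemma cyclicSpan_zero : cyclicSpan p K L (0 : L) = ⊥ := by
  unfold cyclicSpan
  rw [Submodule.span_eq_bot]
  rintro _ ⟨j, rfl⟩
  exact Function.iterate_fixed pmap_zero' j

/-- Construct a Lie subalgebra from a bracket-closed submodule. -/
def mkSub (S : Submodule K L) (hS : ∀ a ∈ S, ∀ b ∈ S, ⁅a, b⁆ ∈ S) :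
    LieSubalgebra K L :=
  { S with lie_mem' := fun {a b} ha hb => hS a ha b hb }

@[simp] lemma mem_mkSub {S : Submodule K L} {hS} {x : L} : x ∈ mkSub S hS ↔ x ∈ S := Iff.rfl

lemma heis_add (hp3 : 3 ≤ p) (x y : L) (hx : ⁅x, ⁅x, y⁆⁆ = 0) (hy : ⁅y, ⁅x, y⁆⁆ = 0) :
    pmap p K L (x + y) = pmap p K L x + pmap p K L y := by
  have hxs : ⁅⁅x, y⁆, x⁆ = 0 := by rw [← lie_skew, hx, neg_zero]
  have hys : ⁅⁅x, y⁆, y⁆ = 0 := by rw [← lie_skew, hy, neg_zero]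
  have key : ∀ a ∈ Submodule.span K ({x, y, ⁅x, y⁆} : Set L),
      ∀ b ∈ Submodule.span K ({x, y, ⁅x, y⁆} : Set L), ⁅a, b⁆ ∈ (K ∙ ⁅x, y⁆) := by
    apply bracket_span_mem
    intro a ha b hb
    simp only [Set.mem_insert_iff, Set.mem_singleton_iff] at ha hb
    rcases ha with rfl | rfl | rfl <;> rcases hb with rfl | rfl | rfl
    · rw [lie_self]; exact zero_mem _
    · exact Submodule.mem_span_singleton_self _
    · rw [hx]; exact zero_mem _
    · exact Submodule.mem_span_singleton.2 ⟨-1, by rw [neg_one_smul, lie_skew]⟩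
    · rw [lie_self]; exact zero_mem _
    · rw [hy]; exact zero_mem _
    · rw [hxs]; exact zero_mem _
    · rw [hys]; exact zero_mem _
    · rw [lie_self]; exact zero_mem _
  have keyh : ∀ a ∈ Submodule.span K ({x, y, ⁅x, y⁆} : Set L), ⁅a, ⁅x, y⁆⁆ = 0 := by
    intro a ha
    have hle : Submodule.span K ({x, y, ⁅x, y⁆} : Set L)
        ≤ LinearMap.ker (LieAlgebra.ad K L ⁅x, y⁆) := by
      apply Submodule.span_le.2
      intro u hu
      simp only [Set.mem_insert_iff, Set.mem_singleton_iff] at hu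
      rcases hu with rfl | rfl | rfl
      · exact hxs
      · exact hys
      · exact lie_self _
    have h1 : ⁅⁅x, y⁆, a⁆ = 0 := hle ha
    rw [← lie_skew, h1, neg_zero]
  have hsingle_le : (K ∙ ⁅x, y⁆) ≤ Submodule.span K ({x, y, ⁅x, y⁆} : Set L) :=
    Submodule.span_le.2 (by
      intro u hu
      rw [Set.mem_singleton_iff] at hu
      subst hu
      exact Submodule.subset_span (by simp))
  set T : LieSubalgebra K L := mkSub (Submodule.span K ({x, y, ⁅x, y⁆} : Set L))
    (fun a ha b hb => hsingle_le (key a ha b hb)) with hT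
  have hST : LieSubalgebra.lieSpan K L {x, y} ≤ T := by
    apply LieSubalgebra.lieSpan_le.2
    intro u hu
    rcases hu with rfl | hu
    · exact Submodule.subset_span (by simp)
    · rw [Set.mem_singleton_iff] at hu; subst hu
      exact Submodule.subset_span (by simp)
  set S : LieSubalgebra K L := LieSubalgebra.lieSpan K L {x, y} with hS
  have hmemT : ∀ u : ↥S, (u : L) ∈ Submodule.span K ({x, y, ⁅x, y⁆} : Set L) :=
    fun u => hST u.2
  let Z : LieSubmodule K ↥S ↥S :=
    { toSubmodule := (K ∙ ⁅x, y⁆).comap (S.incl.toLinearMap)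
      lie_mem := by
        intro u v hv
        have hv' : (v : L) ∈ (K ∙ ⁅x, y⁆) := hv
        obtain ⟨t, ht⟩ := Submodule.mem_span_singleton.1 hv'
        show ⁅(u : L), (v : L)⁆ ∈ (K ∙ ⁅x, y⁆)
        rw [← ht, lie_smul, keyh _ (hmemT u), smul_zero]
        exact zero_mem _ }
  have hmemZ : ∀ u : ↥S, (u : L) ∈ (K ∙ ⁅x, y⁆) → u ∈ Z := fun u hu => hu
  have hZ0 : ∀ (a : ↥S) (b : ↥S), b ∈ Z → ⁅a, b⁆ = 0 := by
    intro a b hb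
    have hbl : (b : L) ∈ (K ∙ ⁅x, y⁆) := hb
    obtain ⟨t, ht⟩ := Submodule.mem_span_singleton.1 hbl
    have hco : ((⁅a, b⁆ : ↥S) : L) = ⁅(a : L), (b : L)⁆ := rfl
    have : ((⁅a, b⁆ : ↥S) : L) = 0 := by
      rw [hco, ← ht, lie_smul, keyh _ (hmemT a), smul_zero]
    exact Subtype.ext this
  have hlcs1 : LieModule.lowerCentralSeries K ↥S ↥S 1 ≤ Z := by
    rw [show (1 : ℕ) = 0 + 1 from rfl, LieModule.lowerCentralSeries_succ,
      LieModule.lowerCentralSeries_zero]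
    rw [LieSubmodule.lie_le_iff]
    intro a _ b _
    exact hmemZ _ (key _ (hmemT a) _ (hmemT b))
  have hlcs2 : LieModule.lowerCentralSeries K ↥S ↥S 2 = ⊥ := by
    rw [eq_bot_iff, show (2 : ℕ) = 1 + 1 from rfl, LieModule.lowerCentralSeries_succ]
    calc ⁅(⊤ : LieIdeal K ↥S), LieModule.lowerCentralSeries K ↥S ↥S 1⁆
        ≤ ⁅(⊤ : LieIdeal K ↥S), Z⁆ := LieSubmodule.mono_lie_right _ hlcs1
      _ ≤ ⊥ := (LieSubmodule.lie_le_iff _ _ _).2 (fun a _ b hb => by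
          rw [LieSubmodule.mem_bot]
          exact hZ0 a b hb)
  have hlcs : LieModule.lowerCentralSeries K ↥S ↥S (p - 1) = ⊥ := by
    have h2 : 2 ≤ p - 1 := by omega
    have := LieModule.antitone_lowerCentralSeries K ↥S ↥S h2
    rw [hlcs2] at this
    exact le_bot_iff.1 this
  have hj := PStructure.jacobson_mem (p := p) (K := K) (L := L) x y
  rw [← hS] at hj
  rw [hlcs] at hj
  have hbot : ((⊥ : LieSubmodule K ↥S ↥S).toSubmodule) = ⊥ := rfl
  rw [hbot, Submodule.map_bot, Submodule.mem_bot] at hj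
  have h1 : pmap p K L (x + y) - pmap p K L x - pmap p K L y = 0 := hj
  rw [sub_sub, sub_eq_zero] at h1
  exact h1

lemma pmap_add_of_comm (hp3 : 3 ≤ p) {x y : L} (hxy : ⁅x, y⁆ = 0) :
    pmap p K L (x + y) = pmap p K L x + pmap p K L y :=
  heis_add hp3 x y (by rw [hxy, lie_zero]) (by rw [hxy, lie_zero])

lemma pmap_neg' (hp3 : 3 ≤ p) (x : L) : pmap p K L (-x) = -pmap p K L x := by
  have h := pmap_smul' (p := p) (-1 : K) x
  rw [neg_one_smul] at h
  rw [h, Odd.neg_one_pow ((Fact.out : Nat.Prime p).odd_of_ne_two (by omega)), neg_one_smul]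

lemma pmap_sub_of_comm (hp3 : 3 ≤ p) {x y : L} (hxy : ⁅x, y⁆ = 0) :
    pmap p K L (x - y) = pmap p K L x - pmap p K L y := by
  rw [sub_eq_add_neg, pmap_add_of_comm hp3 (by rw [lie_neg, hxy, neg_zero]),
    pmap_neg' hp3, sub_eq_add_neg]

lemma pmap_lincomb (hp3 : 3 ≤ p) {x y : L} (hxy : ⁅x, y⁆ = 0) (a b : K) :
    pmap p K L (a • x + b • y) = a ^ p • pmap p K L x + b ^ p • pmap p K L y := by
  rw [pmap_add_of_comm hp3 (by rw [smul_lie, lie_smul, hxy, smul_zero, smul_zero]),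
    pmap_smul', pmap_smul']

lemma iter_mem_psub {A : LieSubalgebra K L} (hA : IsPSubalgebra p K L A) {x : L}
    (hx : x ∈ A) (j : ℕ) : (pmap p K L)^[j] x ∈ A := by
  induction j with
  | zero => exact hx
  | succ j ih => rw [Function.iterate_succ_apply']; exact hA _ ih

section WithInstances
variable [IsAlgClosed K] [CharP K p] [Module.Finite K L]

/-- The image of a commuting submodule under the `p`-map is a submodule. -/
def imSub (hp3 : 3 ≤ p) (A : Submodule K L)
    (habel : ∀ a ∈ A, ∀ b ∈ A, ⁅a, b⁆ = (0 : L)) : Submodule K L where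
  carrier := pmap p K L '' A
  zero_mem' := ⟨0, A.zero_mem, pmap_zero'⟩
  add_mem' := by
    rintro u v ⟨a, ha, rfl⟩ ⟨b, hb, rfl⟩
    exact ⟨a + b, A.add_mem ha hb, pmap_add_of_comm hp3 (habel a ha b hb)⟩
  smul_mem' := by
    rintro t u ⟨a, ha, rfl⟩
    obtain ⟨s, rfl⟩ := IsAlgClosed.exists_pow_nat_eq t (Nat.Prime.pos (Fact.out : Nat.Prime p))
    exact ⟨s • a, A.smul_mem s ha, by rw [pmap_smul']⟩

lemma mem_imSub {hp3 : 3 ≤ p} {A : Submodule K L} {habel} {u : L} :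
    u ∈ imSub hp3 A habel ↔ ∃ a ∈ A, pmap p K L a = u := Iff.rfl

/-- Two commuting, independent elements of the nullcone span an elementary abelian
`2`-plane; so under `E2in A = ∅` they must be dependent. -/
lemma mem_span_of_nullpair (hp3 : 3 ≤ p) {A : LieSubalgebra K L}
    (hE : E2in p K L A = ∅) {v c : L} (hv : v ∈ A.toSubmodule) (hc : c ∈ A.toSubmodule)
    (hvc : ⁅v, c⁆ = 0) (hfv : pmap p K L v = 0) (hfc : pmap p K L c = 0)
    (hc0 : c ≠ 0) : v ∈ (K ∙ c) := by
  by_contra hvs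
  have hli : LinearIndependent K ![v, c] := by
    rw [linearIndependent_fin2]
    constructor
    · simpa using hc0
    · intro a ha
      refine hvs (Submodule.mem_span_singleton.2 ⟨a, ?_⟩)
      simpa using ha
  have hrange : Set.range ![v, c] = ({v, c} : Set L) :=
    Matrix.range_cons_cons_empty v c _
  have hmem : ∀ u ∈ Submodule.span K ({v, c} : Set L), ∃ a b : K, a • v + b • c = u :=
    fun u hu => Submodule.mem_span_pair.1 hu
  have hdim : Module.finrank K ↥(Submodule.span K ({v, c} : Set L)) = 2 := by
    rw [← hrange, finrank_span_eq_card hli, Fintype.card_fin]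
  have hcv : ⁅c, v⁆ = 0 := by rw [← lie_skew, hvc, neg_zero]
  have hcomm : ∀ a ∈ Submodule.span K ({v, c} : Set L),
      ∀ b ∈ Submodule.span K ({v, c} : Set L), ⁅a, b⁆ = (0 : L) := by
    intro a ha b hb
    obtain ⟨a1, a2, rfl⟩ := hmem a ha
    obtain ⟨b1, b2, rfl⟩ := hmem b hb
    simp [lie_add, add_lie, lie_smul, smul_lie, hvc, hcv]
  have hnull : ∀ u ∈ Submodule.span K ({v, c} : Set L), pmap p K L u = 0 := by
    intro u hu
    obtain ⟨a, b, rfl⟩ := hmem u hu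
    rw [pmap_lincomb hp3 hvc, hfv, hfc, smul_zero, smul_zero, add_zero]
  have hle : Submodule.span K ({v, c} : Set L) ≤ A.toSubmodule := by
    apply Submodule.span_le.2
    intro u hu
    rcases hu with rfl | hu
    · exact hv
    · rw [Set.mem_singleton_iff] at hu; subst hu; exact hc
  have hmemE : Submodule.span K ({v, c} : Set L) ∈ E2in p K L A :=
    ⟨⟨hdim, hcomm, hnull⟩, hle⟩
  rw [hE] at hmemE
  exact hmemE

lemma cyclic_of_bot {A : LieSubalgebra K L} (h : A.toSubmodule = ⊥) :
    ∃ z ∈ A, A.toSubmodule = cyclicSpan p K L z := by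
  refine ⟨0, A.zero_mem, ?_⟩
  rw [h, cyclicSpan_zero]

end WithInstances

section Main
variable [IsAlgClosed K] [CharP K p] [Module.Finite K L]

theorem cyclic_of_no_e2 (hp3 : 3 ≤ p) (hu : IsUnipotent p K L) :
    ∀ (d : ℕ) (A : LieSubalgebra K L), Module.finrank K A.toSubmodule ≤ d →
      IsPSubalgebra p K L A → E2in p K L A = ∅ →
      ∃ z ∈ A, A.toSubmodule = cyclicSpan p K L z := by
  classical
  obtain ⟨N, hN⟩ := hu
  intro d
  induction d with
  | zero =>
    intro A hrank hA hE
    refine cyclic_of_bot ?_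
    have h0 : Module.finrank K A.toSubmodule = 0 := Nat.le_zero.1 hrank
    exact Submodule.finrank_eq_zero.1 h0
  | succ d ih =>
    intro A hrank hA hE
    by_cases hd : Module.finrank K A.toSubmodule ≤ d
    · exact ih A hd hA hE
    have hfin : ∀ B : LieSubalgebra K L, B.toSubmodule < A.toSubmodule →
        IsPSubalgebra p K L B → E2in p K L B = ∅ →
        ∃ z ∈ B, B.toSubmodule = cyclicSpan p K L z := by
      intro B hlt hB hEB
      refine ih B ?_ hB hEB
      have := Submodule.finrank_lt_finrank_of_lt hlt
      omega
    have hEmono : ∀ B : LieSubalgebra K L, B.toSubmodule ≤ A.toSubmodule →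
        E2in p K L B = ∅ := by
      intro B hle
      rw [Set.eq_empty_iff_forall_notMem]
      intro e he
      have hmem : e ∈ E2in p K L A := ⟨he.1, he.2.trans hle⟩
      rw [hE] at hmem
      exact hmem
    -- Step 1: A is abelian
    have habel : ∀ a ∈ A.toSubmodule, ∀ b ∈ A.toSubmodule, ⁅a, b⁆ = (0 : L) := by
      by_contra hcon
      push_neg at hcon
      obtain ⟨x₁, hx₁A, y, hyA, hbr⟩ := hcon
      have hkery : ∀ w : L, w ∈ LinearMap.ker (LieAlgebra.ad K L y) ↔ ⁅y, w⁆ = 0 := by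
        intro w; rw [LinearMap.mem_ker, LieAlgebra.ad_apply]
      set M : LieSubalgebra K L := mkSub
        (A.toSubmodule ⊓ LinearMap.ker (LieAlgebra.ad K L y))
        (by
          intro a ha b hb
          rw [Submodule.mem_inf] at ha hb ⊢
          refine ⟨A.lie_mem ha.1 hb.1, ?_⟩
          rw [hkery]
          have h1 : ⁅y, a⁆ = 0 := (hkery a).1 ha.2
          have h2 : ⁅y, b⁆ = 0 := (hkery b).1 hb.2
          rw [leibniz_lie, h1, h2, zero_lie, lie_zero, add_zero]) with hMdef
      have hmemM : ∀ w : L, w ∈ M.toSubmodule ↔ w ∈ A.toSubmodule ∧ ⁅y, w⁆ = 0 := by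
        intro w
        have : w ∈ M.toSubmodule ↔
            w ∈ A.toSubmodule ⊓ LinearMap.ker (LieAlgebra.ad K L y) := Iff.rfl
        rw [this, Submodule.mem_inf, hkery]
      have hMp : IsPSubalgebra p K L M := by
        intro w hw
        obtain ⟨hwA, hwy⟩ := (hmemM w).1 hw
        refine (hmemM _).2 ⟨hA w hwA, ?_⟩
        have h1 : ⁅w, y⁆ = 0 := by rw [← lie_skew, hwy, neg_zero]
        have h2 : (LieAlgebra.ad K L w ^ p) y = 0 := by
          obtain ⟨q, hq⟩ : ∃ q, p = q + 1 := ⟨p - 1, by omega⟩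
          rw [hq, pow_succ, Module.End.mul_apply, LieAlgebra.ad_apply, h1, map_zero]
        have h3 : ⁅pmap p K L w, y⁆ = 0 := by
          have h4 : ⁅pmap p K L w, y⁆ = LieAlgebra.ad K L (pmap p K L w) y := rfl
          rw [h4, ad_pmap', h2]
        rw [← lie_skew, h3, neg_zero]
      have hx₁M : x₁ ∉ M.toSubmodule := by
        intro h
        exact hbr (by rw [← lie_skew, ((hmemM x₁).1 h).2, neg_zero])
      have hMle : M.toSubmodule ≤ A.toSubmodule := fun w hw => ((hmemM w).1 hw).1
      have hMlt : M.toSubmodule < A.toSubmodule :=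
        lt_of_le_of_ne hMle (fun heq => hx₁M (by rw [heq]; exact hx₁A))
      obtain ⟨w₀, hw₀M, hMcyc⟩ := hfin M hMlt hMp (hEmono M hMle)
      have habelM : ∀ a ∈ M.toSubmodule, ∀ b ∈ M.toSubmodule, ⁅a, b⁆ = (0 : L) := by
        intro a ha b hb
        rw [hMcyc] at ha hb
        exact cyclicSpan_comm w₀ a ha b hb
      have hyM : y ∈ M.toSubmodule := (hmemM y).2 ⟨hyA, lie_self y⟩
      -- Engel: A is a nilpotent Lie algebra
      have hnilA : LieRing.IsNilpotent ↥A := by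
        rw [LieAlgebra.isNilpotent_iff_forall (R := K)]
        intro u
        have hcoe : ∀ (k : ℕ) (v : ↥A), (((LieAlgebra.ad K ↥A u ^ k) v : ↥A) : L)
            = (LieAlgebra.ad K L (u : L) ^ k) (v : L) := by
          intro k
          induction k with
          | zero => intro v; simp
          | succ k ihk =>
            intro v
            rw [pow_succ', Module.End.mul_apply, pow_succ', Module.End.mul_apply]
            have h1 : ((LieAlgebra.ad K ↥A u ((LieAlgebra.ad K ↥A u ^ k) v) : ↥A) : L)
                = ⁅(u : L), (((LieAlgebra.ad K ↥A u ^ k) v : ↥A) : L)⁆ := rfl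
            rw [h1, ihk v, LieAlgebra.ad_apply]
        refine ⟨p ^ N, ?_⟩
        ext v
        have h2 := hcoe (p ^ N) v
        have h3 : LieAlgebra.ad K L (u : L) ^ p ^ N = 0 := by
          rw [← ad_pmap_iter (p := p) (K := K), hN (u : L)]
          simp
        rw [h3] at h2
        simp only [LinearMap.zero_apply] at h2 ⊢
        simp only [ZeroMemClass.coe_zero]
        exact h2
      obtain ⟨knil, hknil⟩ := (LieModule.isNilpotent_iff K ↥A ↥A).1 hnilA
      -- find an element normalizing M outside M
      have hPex : ∃ k : ℕ, ∀ u : ↥A, u ∈ LieModule.lowerCentralSeries K ↥A ↥A k →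
          (u : L) ∈ M.toSubmodule := by
        refine ⟨knil, fun u hu => ?_⟩
        rw [hknil, LieSubmodule.mem_bot] at hu
        rw [hu, ZeroMemClass.coe_zero]
        exact M.toSubmodule.zero_mem
      have hk₀ne : Nat.find hPex ≠ 0 := by
        intro h0
        have hsp := Nat.find_spec hPex
        rw [h0] at hsp
        exact hx₁M (hsp ⟨x₁, hx₁A⟩ (by rw [LieModule.lowerCentralSeries_zero]; trivial))
      obtain ⟨u₀, hu₀lcs, hu₀M⟩ : ∃ u : ↥A,
          u ∈ LieModule.lowerCentralSeries K ↥A ↥A (Nat.find hPex - 1) ∧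
          (u : L) ∉ M.toSubmodule := by
        have hmin := Nat.find_min hPex (show Nat.find hPex - 1 < Nat.find hPex by omega)
        push_neg at hmin
        exact hmin
      have hx₀A : (u₀ : L) ∈ A.toSubmodule := u₀.2
      have hnorm : ∀ m ∈ M.toSubmodule, ⁅(u₀ : L), m⁆ ∈ M.toSubmodule := by
        intro m hm
        have hmA : m ∈ A.toSubmodule := hMle hm
        have hlie : ⁅(⟨m, hmA⟩ : ↥A), u₀⁆ ∈
            LieModule.lowerCentralSeries K ↥A ↥A (Nat.find hPex - 1 + 1) := by
          rw [LieModule.lowerCentralSeries_succ]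
          exact LieSubmodule.lie_mem_lie trivial hu₀lcs
        have h2 : ((⁅(⟨m, hmA⟩ : ↥A), u₀⁆ : ↥A) : L) ∈ M.toSubmodule := by
          apply Nat.find_spec hPex
          rw [show Nat.find hPex = Nat.find hPex - 1 + 1 by omega]
          exact hlie
        have hco : ((⁅(⟨m, hmA⟩ : ↥A), u₀⁆ : ↥A) : L) = ⁅m, (u₀ : L)⁆ := rfl
        rw [hco] at h2
        rw [← lie_skew]
        exact M.toSubmodule.neg_mem h2
      -- replace by a suitable iterate x with pmap x ∈ M
      have hQex : ∃ r : ℕ, (pmap p K L)^[r] (u₀ : L) ∈ M.toSubmodule := by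
        refine ⟨N, ?_⟩; rw [hN]; exact M.toSubmodule.zero_mem
      have hr₀ne : Nat.find hQex ≠ 0 := by
        intro h0
        have hsp := Nat.find_spec hQex
        rw [h0, Function.iterate_zero_apply] at hsp
        exact hu₀M hsp
      set x : L := (pmap p K L)^[Nat.find hQex - 1] (u₀ : L) with hxdef
      have hxA : x ∈ A.toSubmodule := iter_mem_psub hA hx₀A _
      have hxM : x ∉ M.toSubmodule := Nat.find_min hQex (by omega)
      have hfxM : pmap p K L x ∈ M.toSubmodule := by
        rw [hxdef, ← Function.iterate_succ_apply' (pmap p K L),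
          show (Nat.find hQex - 1).succ = Nat.find hQex by omega]
        exact Nat.find_spec hQex
      have hxnorm : ∀ m ∈ M.toSubmodule, ⁅x, m⁆ ∈ M.toSubmodule := by
        intro m hm
        have hiter : ∀ (k : ℕ) (m : L), m ∈ M.toSubmodule →
            (LieAlgebra.ad K L (u₀ : L) ^ k) m ∈ M.toSubmodule := by
          intro k
          induction k with
          | zero => intro m hm; simpa using hm
          | succ k ihk =>
            intro m hm
            rw [pow_succ', Module.End.mul_apply]
            have h1 : (LieAlgebra.ad K L (u₀ : L)) ((LieAlgebra.ad K L (u₀ : L) ^ k) m)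
                = ⁅(u₀ : L), (LieAlgebra.ad K L (u₀ : L) ^ k) m⁆ := rfl
            rw [h1]
            exact hnorm _ (ihk m hm)
        have hx_as : ⁅x, m⁆ = (LieAlgebra.ad K L (u₀ : L) ^ p ^ (Nat.find hQex - 1)) m := by
          rw [← ad_pmap_iter (p := p) (K := K)]
          rfl
        rw [hx_as]
        exact hiter _ m hm
      have hxyne : ⁅y, x⁆ ≠ 0 := fun h => hxM ((hmemM x).2 ⟨hxA, h⟩)
      -- the image span fM
      set fM : Submodule K L := Submodule.span K
        (Set.range fun j : ℕ => (pmap p K L)^[j + 1] w₀) with hfMdef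
      have hfM_le : fM ≤ M.toSubmodule := by
        rw [hMcyc, hfMdef]
        exact Submodule.span_le.2
          (by rintro _ ⟨j, rfl⟩; exact iter_mem_cyclicSpan w₀ (j + 1))
      have hsup : cyclicSpan p K L w₀ = (K ∙ w₀) ⊔ fM := by
        rw [hfMdef]
        unfold cyclicSpan
        rw [← Submodule.span_union]
        congr 1
        ext u
        simp only [Set.mem_union, Set.mem_range, Set.mem_singleton_iff]
        constructor
        · rintro ⟨j, rfl⟩
          cases j with
          | zero => exact Or.inl rfl
          | succ j => exact Or.inr ⟨j, rfl⟩
        · rintro (rfl | ⟨j, rfl⟩)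
          · exact ⟨0, rfl⟩
          · exact ⟨j + 1, rfl⟩
      have hMdec : ∀ m ∈ M.toSubmodule, ∃ (a : K) (u : L), u ∈ fM ∧ m = a • w₀ + u := by
        intro m hm
        have hmem : m ∈ (K ∙ w₀) ⊔ fM := by rw [← hsup, ← hMcyc]; exact hm
        rw [Submodule.mem_sup] at hmem
        obtain ⟨t, ht, u, hu, heq⟩ := hmem
        obtain ⟨a, rfl⟩ := Submodule.mem_span_singleton.1 ht
        exact ⟨a, u, hu, heq.symm⟩
      have hF2 : ∀ m ∈ M.toSubmodule, ⁅x, pmap p K L m⁆ = 0 := by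
        intro m hm
        have h1 : ⁅m, x⁆ ∈ M.toSubmodule := by
          rw [← lie_skew]; exact M.toSubmodule.neg_mem (hxnorm m hm)
        have h2 : (LieAlgebra.ad K L m ^ 2) x = 0 := by
          rw [sq, Module.End.mul_apply]
          have h5 : (LieAlgebra.ad K L m) x = ⁅m, x⁆ := rfl
          rw [h5, LieAlgebra.ad_apply]
          exact habelM m hm _ h1
        obtain ⟨q, hq⟩ : ∃ q, p = q + 2 := ⟨p - 2, by omega⟩
        have h3 : (LieAlgebra.ad K L m ^ p) x = 0 := by
          rw [hq, pow_add, Module.End.mul_apply, h2, map_zero]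
        have h4 : ⁅pmap p K L m, x⁆ = 0 := by
          have h5 : ⁅pmap p K L m, x⁆ = LieAlgebra.ad K L (pmap p K L m) x := rfl
          rw [h5, ad_pmap', h3]
        rw [← lie_skew, h4, neg_zero]
      have hDfM : ∀ u ∈ fM, ⁅x, u⁆ = 0 := by
        intro u hu
        have hle : fM ≤ LinearMap.ker (LieAlgebra.ad K L x) := by
          rw [hfMdef]
          apply Submodule.span_le.2
          rintro _ ⟨j, rfl⟩
          have hmem : (pmap p K L)^[j] w₀ ∈ M.toSubmodule := by
            rw [hMcyc]; exact iter_mem_cyclicSpan w₀ j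
          show (pmap p K L)^[j + 1] w₀ ∈ (LinearMap.ker (LieAlgebra.ad K L x) : Set L)
          rw [SetLike.mem_coe, LinearMap.mem_ker, LieAlgebra.ad_apply,
            Function.iterate_succ_apply' (pmap p K L)]
          exact hF2 _ hmem
        exact LinearMap.mem_ker.1 (hle hu)
      have hDw₀M : ⁅x, w₀⁆ ∈ M.toSubmodule := hxnorm w₀ hw₀M
      have hDw₀fM : ⁅x, w₀⁆ ∈ fM := by
        obtain ⟨β, u, hufM, hdec⟩ := hMdec _ hDw₀M
        by_cases hβ : β = 0
        · rw [hdec, hβ, zero_smul, zero_add]; exact hufM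
        · have hins : ⁅x, ⁅x, w₀⁆⁆ = β • ⁅x, w₀⁆ := by
            conv_lhs => rw [hdec]
            rw [lie_add, lie_smul, hDfM u hufM, add_zero]
          have hk : ∀ k : ℕ, (LieAlgebra.ad K L x ^ (k + 1)) w₀ = β ^ k • ⁅x, w₀⁆ := by
            intro k
            induction k with
            | zero => rw [pow_one, LieAlgebra.ad_apply, pow_zero, one_smul]
            | succ k ihk =>
              rw [pow_succ', Module.End.mul_apply, ihk, map_smul, LieAlgebra.ad_apply,
                hins, smul_smul, ← pow_succ]
          have hzN : LieAlgebra.ad K L x ^ p ^ N = 0 := by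
            rw [← ad_pmap_iter (p := p) (K := K), hN x]
            simp
          obtain ⟨t, ht⟩ : ∃ t, p ^ N = t + 1 :=
            ⟨p ^ N - 1, by have := pow_pos (Fact.out : Nat.Prime p).pos N; omega⟩
          have h0 := hk t
          rw [← ht, hzN] at h0
          simp only [LinearMap.zero_apply] at h0
          have hD0 : ⁅x, w₀⁆ = 0 := by
            rcases smul_eq_zero.1 h0.symm with h | h
            · exact absurd h (pow_ne_zero t hβ)
            · exact h
          rw [hD0]; exact fM.zero_mem
      have hDw₀ne : ⁅x, w₀⁆ ≠ 0 := by
        intro h0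
        obtain ⟨a, u, hufM, hdec⟩ := hMdec y hyM
        have hxy0 : ⁅x, y⁆ = 0 := by
          rw [hdec, lie_add, lie_smul, h0, smul_zero, hDfM u hufM, add_zero]
        exact hxyne (by rw [← lie_skew, hxy0, neg_zero])
      have hDM : ∀ m ∈ M.toSubmodule, ⁅x, m⁆ ∈ fM := by
        intro m hm
        obtain ⟨a, u, hufM, hdec⟩ := hMdec m hm
        rw [hdec, lie_add, lie_smul, hDfM u hufM, add_zero]
        exact fM.smul_mem a hDw₀fM
      have hm₀fM : pmap p K L x ∈ fM := by
        have h1 : ⁅pmap p K L x, x⁆ = 0 := by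
          have h5 : ⁅pmap p K L x, x⁆ = LieAlgebra.ad K L (pmap p K L x) x := rfl
          obtain ⟨q, hq⟩ : ∃ q, p = q + 1 := ⟨p - 1, by omega⟩
          rw [h5, ad_pmap', hq]
          exact ad_pow_self x q
        have h2 : ⁅x, pmap p K L x⁆ = 0 := by rw [← lie_skew, h1, neg_zero]
        obtain ⟨a, u, hufM, hdec⟩ := hMdec _ hfxM
        rw [hdec, lie_add, lie_smul, hDfM u hufM, add_zero] at h2
        rcases smul_eq_zero.1 h2 with h | h
        · rw [hdec, h, zero_smul, zero_add]; exact hufM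
        · exact absurd h hDw₀ne
      have hfM_im : ∀ u ∈ fM, ∃ m ∈ M.toSubmodule, pmap p K L m = u := by
        intro u hu
        have hle : fM ≤ imSub hp3 M.toSubmodule habelM := by
          rw [hfMdef]
          apply Submodule.span_le.2
          rintro _ ⟨j, rfl⟩
          refine ⟨(pmap p K L)^[j] w₀,
            by rw [hMcyc]; exact iter_mem_cyclicSpan w₀ j, ?_⟩
          show pmap p K L ((pmap p K L)^[j] w₀) = (pmap p K L)^[j + 1] w₀
          rw [Function.iterate_succ_apply' (pmap p K L)]
        exact hle hu
      obtain ⟨m₁, hm₁M, hm₁⟩ := hfM_im _ (fM.neg_mem hm₀fM)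
      have hxm₁ : ⁅x, m₁⁆ ∈ fM := hDM m₁ hm₁M
      have hfv : pmap p K L (x + m₁) = 0 := by
        rw [heis_add hp3 x m₁ (hDfM _ hxm₁) (habelM m₁ hm₁M _ (hfM_le hxm₁)), hm₁,
          add_neg_cancel]
      have hfw₀ne : pmap p K L w₀ ≠ 0 := by
        intro h0
        have hbot : fM = ⊥ := by
          rw [hfMdef, Submodule.span_eq_bot]
          rintro _ ⟨j, rfl⟩
          show (pmap p K L)^[j + 1] w₀ = 0
          rw [Function.iterate_succ_apply (pmap p K L), h0]
          exact Function.iterate_fixed pmap_zero' j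
        rw [hbot] at hDw₀fM
        exact hDw₀ne ((Submodule.mem_bot K).1 hDw₀fM)
      have hCex : ∃ k, (pmap p K L)^[k] w₀ = 0 := ⟨N, hN w₀⟩
      have hk2 : 2 ≤ Nat.find hCex := by
        by_contra hlt2
        have hsp := Nat.find_spec hCex
        rcases (show Nat.find hCex = 0 ∨ Nat.find hCex = 1 by omega) with h | h
        · rw [h, Function.iterate_zero_apply] at hsp
          exact hfw₀ne (by rw [hsp, pmap_zero'])
        · rw [h, Function.iterate_one] at hsp
          exact hfw₀ne hsp
      have hcne : (pmap p K L)^[Nat.find hCex - 1] w₀ ≠ 0 := Nat.find_min hCex (by omega)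
      have hfc : pmap p K L ((pmap p K L)^[Nat.find hCex - 1] w₀) = 0 := by
        rw [← Function.iterate_succ_apply' (pmap p K L),
          show (Nat.find hCex - 1).succ = Nat.find hCex by omega]
        exact Nat.find_spec hCex
      have hcfM : (pmap p K L)^[Nat.find hCex - 1] w₀ ∈ fM := by
        rw [hfMdef, show Nat.find hCex - 1 = (Nat.find hCex - 2) + 1 by omega]
        exact Submodule.subset_span ⟨Nat.find hCex - 2, rfl⟩
      have hvA : x + m₁ ∈ A.toSubmodule := A.toSubmodule.add_mem hxA (hMle hm₁M)
      have hcA : (pmap p K L)^[Nat.find hCex - 1] w₀ ∈ A.toSubmodule :=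
        hMle (hfM_le hcfM)
      have hvc : ⁅x + m₁, (pmap p K L)^[Nat.find hCex - 1] w₀⁆ = 0 := by
        rw [add_lie, hDfM _ hcfM, habelM m₁ hm₁M _ (hfM_le hcfM), add_zero]
      have hvKc := mem_span_of_nullpair hp3 hE hvA hcA hvc hfv hfc hcne
      have hKcle : (K ∙ (pmap p K L)^[Nat.find hCex - 1] w₀) ≤ fM :=
        (Submodule.span_singleton_le_iff_mem _ _).2 hcfM
      have hvM : x + m₁ ∈ M.toSubmodule := hfM_le (hKcle hvKc)
      refine hxM ?_
      have hxeq : x = (x + m₁) - m₁ := by abel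
      rw [hxeq]
      exact M.toSubmodule.sub_mem hvM hm₁M
    -- Step 2: the abelian case
    by_cases hAbot : A.toSubmodule = ⊥
    · exact cyclic_of_bot hAbot
    obtain ⟨a₀, ha₀A, ha₀ne⟩ := (Submodule.ne_bot_iff _).1 hAbot
    have himA_le : imSub hp3 A.toSubmodule habel ≤ A.toSubmodule := by
      rintro u ⟨a, ha, rfl⟩
      exact hA a ha
    by_cases him : imSub hp3 A.toSubmodule habel = ⊥
    · -- the p-map vanishes on A
      have hf0 : ∀ a ∈ A.toSubmodule, pmap p K L a = 0 := by
        intro a ha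
        have hmem : pmap p K L a ∈ imSub hp3 A.toSubmodule habel := ⟨a, ha, rfl⟩
        rw [him] at hmem
        exact (Submodule.mem_bot K).1 hmem
      refine ⟨a₀, ha₀A, le_antisymm ?_ ?_⟩
      · intro a ha
        have hmem := mem_span_of_nullpair hp3 hE ha ha₀A (habel a ha a₀ ha₀A)
          (hf0 a ha) (hf0 a₀ ha₀A) ha₀ne
        have hKle : (K ∙ a₀) ≤ cyclicSpan p K L a₀ :=
          (Submodule.span_singleton_le_iff_mem _ _).2 (iter_mem_cyclicSpan a₀ 0)
        exact hKle hmem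
      · exact Submodule.span_le.2 (by rintro _ ⟨j, rfl⟩; exact iter_mem_psub hA ha₀A j)
    · -- the image algebra is a proper nonzero p-subalgebra
      set fA : LieSubalgebra K L := mkSub (imSub hp3 A.toSubmodule habel)
        (fun a ha b hb => by
          rw [habel a (himA_le ha) b (himA_le hb)]; exact zero_mem _) with hfAdef
      have hfA_tS : fA.toSubmodule = imSub hp3 A.toSubmodule habel := rfl
      have hfAp : IsPSubalgebra p K L fA := by
        rintro u ⟨a, ha, rfl⟩
        exact ⟨pmap p K L a, hA a ha, rfl⟩
      have hfAne : fA.toSubmodule ≠ A.toSubmodule := by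
        intro heq
        have hsur : ∀ t : ℕ, ∀ a ∈ A.toSubmodule, ∃ b ∈ A.toSubmodule,
            (pmap p K L)^[t] b = a := by
          intro t
          induction t with
          | zero => exact fun a ha => ⟨a, ha, rfl⟩
          | succ t iht =>
            intro a ha
            have hmem : a ∈ imSub hp3 A.toSubmodule habel := by
              rw [← hfA_tS, heq]; exact ha
            obtain ⟨a', ha', hfa'⟩ := hmem
            obtain ⟨b, hb, hfb⟩ := iht a' ha'
            exact ⟨b, hb, by rw [Function.iterate_succ_apply', hfb, hfa']⟩
        obtain ⟨b, hb, hfb⟩ := hsur N a₀ ha₀A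
        rw [hN b] at hfb
        exact ha₀ne hfb.symm
      have hlt : fA.toSubmodule < A.toSubmodule :=
        lt_of_le_of_ne himA_le hfAne
      obtain ⟨w, hwfA, hwcyc⟩ := hfin fA hlt hfAp (hEmono fA himA_le)
      obtain ⟨z₀, hz₀A, hz₀⟩ : ∃ a ∈ A.toSubmodule, pmap p K L a = w := hwfA
      have hwne : w ≠ 0 := by
        intro h0
        apply him
        rw [← hfA_tS, hwcyc, h0, cyclicSpan_zero]
      have hS_le : cyclicSpan p K L z₀ ≤ A.toSubmodule :=
        Submodule.span_le.2 (by rintro _ ⟨j, rfl⟩; exact iter_mem_psub hA hz₀A j)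
      have hz₀ne : z₀ ≠ 0 := by
        intro h; rw [h, pmap_zero'] at hz₀; exact hwne hz₀.symm
      have hCex : ∃ k, (pmap p K L)^[k] z₀ = 0 := ⟨N, hN z₀⟩
      have hkc0 : Nat.find hCex ≠ 0 := by
        intro h
        have := Nat.find_spec hCex
        rw [h] at this
        exact hz₀ne this
      have hcne : (pmap p K L)^[Nat.find hCex - 1] z₀ ≠ 0 :=
        Nat.find_min hCex (by omega)
      have hfc : pmap p K L ((pmap p K L)^[Nat.find hCex - 1] z₀) = 0 := by
        rw [← Function.iterate_succ_apply' (pmap p K L),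
          show (Nat.find hCex - 1).succ = Nat.find hCex by omega]
        exact Nat.find_spec hCex
      have hcS : (pmap p K L)^[Nat.find hCex - 1] z₀ ∈ cyclicSpan p K L z₀ :=
        iter_mem_cyclicSpan z₀ _
      refine ⟨z₀, hz₀A, le_antisymm ?_ hS_le⟩
      intro a ha
      have hfaw : pmap p K L a ∈ cyclicSpan p K L w := by
        rw [← hwcyc, hfA_tS]; exact ⟨a, ha, rfl⟩
      have hScomm : ∀ u ∈ cyclicSpan p K L z₀, ∀ v ∈ cyclicSpan p K L z₀,
          ⁅u, v⁆ = (0 : L) := cyclicSpan_comm z₀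
      have himS : cyclicSpan p K L w ≤ imSub hp3 (cyclicSpan p K L z₀) hScomm := by
        apply Submodule.span_le.2
        rintro _ ⟨j, rfl⟩
        refine ⟨(pmap p K L)^[j] z₀, iter_mem_cyclicSpan z₀ j, ?_⟩
        show pmap p K L ((pmap p K L)^[j] z₀) = (pmap p K L)^[j] w
        rw [← hz₀, ← Function.iterate_succ_apply (pmap p K L),
          Function.iterate_succ_apply' (pmap p K L)]
      obtain ⟨s, hsS, hfs⟩ := himS hfaw
      have hdiff : pmap p K L (a - s) = 0 := by
        rw [pmap_sub_of_comm hp3 (habel a ha s (hS_le hsS)), hfs, sub_self]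
      have hmem := mem_span_of_nullpair hp3 hE
        (A.toSubmodule.sub_mem ha (hS_le hsS)) (hS_le hcS)
        (habel _ (A.toSubmodule.sub_mem ha (hS_le hsS)) _ (hS_le hcS))
        hdiff hfc hcne
      have hKle : (K ∙ (pmap p K L)^[Nat.find hCex - 1] z₀) ≤ cyclicSpan p K L z₀ :=
        (Submodule.span_singleton_le_iff_mem _ _).2 hcS
      have haS : a - s ∈ cyclicSpan p K L z₀ := hKle hmem
      have : a = a - s + s := by abel
      rw [this]
      exact (cyclicSpan p K L z₀).add_mem haS hsS

end Main

end Statement4Proof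

/-- With `𝔪, 𝔫 ∈ Max_p(𝔲)` such that `E(2,𝔪) ∩ E(2,𝔫) = ∅`, the `p`-ideal
`𝔪 ∩ 𝔫` is cyclic: generated as a `p`-subalgebra by a single element. -/
theorem statement4 (p : ℕ) (K L : Type) [Field K] [IsAlgClosed K] [CharP K p]
    [Fact (Nat.Prime p)] (hp3 : 3 ≤ p) [LieRing L] [LieAlgebra K L] [Module.Finite K L]
    [PStructure p K L] (hu : IsUnipotent p K L) (m n : LieSubalgebra K L)
    (hm : m ∈ MaxP p K L) (hn : n ∈ MaxP p K L) (hmn : m ≠ n)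
    (hdisj : E2in p K L m ∩ E2in p K L n = ∅) :
    ∃ z : L, (m ⊓ n).toSubmodule = cyclicSpan p K L z := by
  classical
  have hAps : IsPSubalgebra p K L (m ⊓ n) := by
    intro x hx
    rw [LieSubalgebra.mem_inf] at hx ⊢
    exact ⟨hm.1 x hx.1, hn.1 x hx.2⟩
  have hle1 : (m ⊓ n).toSubmodule ≤ m.toSubmodule := by
    intro u hu
    exact ((LieSubalgebra.mem_inf m n u).1 hu).1
  have hle2 : (m ⊓ n).toSubmodule ≤ n.toSubmodule := by
    intro u hu
    exact ((LieSubalgebra.mem_inf m n u).1 hu).2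
  have hEmn : E2in p K L (m ⊓ n) = ∅ := by
    rw [Set.eq_empty_iff_forall_notMem]
    intro e he
    have hmem : e ∈ E2in p K L m ∩ E2in p K L n :=
      ⟨⟨he.1, he.2.trans hle1⟩, ⟨he.1, he.2.trans hle2⟩⟩
    rw [hdisj] at hmem
    exact hmem
  obtain ⟨z, _, hz⟩ := cyclic_of_no_e2 hp3 hu
    (Module.finrank K (m ⊓ n).toSubmodule) (m ⊓ n) le_rfl hAps hEmn
  exact ⟨z, hz⟩

end Paper
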